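/- Let X be a Banach space, Y a closed subspace, and suppose the Banach–Mazur distance from X/Y to some ℓ₁(Γ) space is at most C. Then there is a bounded linear projection from X onto Y of norm at most 1 + C; i.e., the relative projection constant λ(Y, X) ≤ 1 + C. -/

import Mathlib

instance : Fact ((1 : ENNReal) ≤ 1) := ⟨le_rfl⟩

/-!
`ℓ¹(Γ)` has the lifting property: to lift an operator `T : ℓ¹(Γ) → X/Y` through the quotient map
`Q`, pick for each unit vector of `ℓ¹(Γ)` a preimage of its image under `T` of norm below
`‖T‖ + δ`, and extend by summation. Lifting `e⁻¹` this way gives `T̂` with `Q T̂ = e⁻¹`, so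
`P = I - T̂ e Q` fixes `Y = ker Q`, maps into it, and has norm at most
`1 + (‖e⁻¹‖ + δ) ‖e‖ ≤ 1 + C + ε` for `δ` small.
-/

open lp

namespace lp

variable {𝕜 : Type*} [NontriviallyNormedField 𝕜] {Γ : Type*}
  {E : Type*} [NormedAddCommGroup E] [NormedSpace 𝕜 E]

theorem hasSum_norm_of_one {F : Γ → Type*} [∀ γ, NormedAddCommGroup (F γ)] (f : lp F 1) :
    HasSum (fun γ => ‖f γ‖) ‖f‖ := by
  simpa using lp.hasSum_norm (p := 1) (by norm_num) f

theorem norm_apply_smul_le {u : Γ → E} {M : ℝ} (hu : ∀ γ, ‖u γ‖ ≤ M)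
    (f : ℓ¹(Γ, 𝕜)) (γ : Γ) : ‖f γ • u γ‖ ≤ ‖f γ‖ * M := by
  rw [norm_smul]
  exact mul_le_mul_of_nonneg_left (hu γ) (norm_nonneg _)

theorem summable_smul_of_norm_le [CompleteSpace E] {u : Γ → E} {M : ℝ} (hu : ∀ γ, ‖u γ‖ ≤ M)
    (f : ℓ¹(Γ, 𝕜)) : Summable fun γ => f γ • u γ :=
  .of_norm_bounded ((hasSum_norm_of_one f).summable.mul_right M) (norm_apply_smul_le hu f)

variable [CompleteSpace E]

noncomputable def tsumSmulCLM (u : Γ → E) (M : ℝ) (hu : ∀ γ, ‖u γ‖ ≤ M) : ℓ¹(Γ, 𝕜) →L[𝕜] E :=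
  LinearMap.mkContinuous
    { toFun f := ∑' γ, f γ • u γ
      map_add' f g := by
        simp only [coeFn_add, Pi.add_apply, add_smul]
        exact (summable_smul_of_norm_le hu f).tsum_add (summable_smul_of_norm_le hu g)
      map_smul' c f := by
        simp only [coeFn_smul, Pi.smul_apply, smul_eq_mul, mul_smul, RingHom.id_apply]
        exact (summable_smul_of_norm_le hu f).tsum_const_smul c }
    M fun f =>
      (tsum_of_norm_bounded ((hasSum_norm_of_one f).mul_right M)
        (norm_apply_smul_le hu f)).trans_eq (mul_comm _ _)

theorem tsumSmulCLM_apply (u : Γ → E) (M : ℝ) (hu : ∀ γ, ‖u γ‖ ≤ M) (f : ℓ¹(Γ, 𝕜)) :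
    tsumSmulCLM u M hu f = ∑' γ, f γ • u γ := rfl

theorem tsumSmulCLM_single [DecidableEq Γ] (u : Γ → E) (M : ℝ) (hu : ∀ γ, ‖u γ‖ ≤ M)
    (γ : Γ) (c : 𝕜) :
    tsumSmulCLM u M hu (lp.single 1 γ c) = c • u γ := by
  rw [tsumSmulCLM_apply, tsum_eq_single γ]
  · simp
  · intro γ' h
    simp [Pi.single_eq_of_ne h]

theorem norm_tsumSmulCLM_le (u : Γ → E) {M : ℝ} (hu : ∀ γ, ‖u γ‖ ≤ M) (hM : 0 ≤ M) :
    ‖(tsumSmulCLM u M hu : ℓ¹(Γ, 𝕜) →L[𝕜] E)‖ ≤ M :=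
  LinearMap.mkContinuous_norm_le _ hM _

end lp

namespace Submodule

variable {𝕜 X : Type*} [NontriviallyNormedField 𝕜] [NormedAddCommGroup X] [NormedSpace 𝕜 X]
  (Y : Submodule 𝕜 X)

theorem norm_mkQL_le : ‖Y.mkQL‖ ≤ 1 :=
  ContinuousLinearMap.opNorm_le_bound _ zero_le_one fun x => by
    simpa using Quotient.norm_mk_le Y x

theorem exists_projection_of_mkQL_comp_eq_id (L : X ⧸ Y →L[𝕜] X)
    (hL : Y.mkQL ∘L L = .id 𝕜 (X ⧸ Y)) :
    ∃ P : X →L[𝕜] X, (∀ x, P x ∈ Y) ∧ (∀ y ∈ Y, P y = y) ∧ ‖P‖ ≤ 1 + ‖L‖ := by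
  refine ⟨.id 𝕜 X - L ∘L Y.mkQL, fun x => ?_, fun y hy => ?_, ?_⟩
  · rw [← Quotient.mk_eq_zero]
    simpa [sub_eq_zero] using congr($hL (Y.mkQ x)).symm
  · simp [(Quotient.mk_eq_zero Y).2 hy]
  · calc ‖.id 𝕜 X - L ∘L Y.mkQL‖ ≤ ‖ContinuousLinearMap.id 𝕜 X‖ + ‖L‖ * ‖Y.mkQL‖ :=
          (norm_sub_le _ _).trans (add_le_add_right (L.opNorm_comp_le _) _)
      _ ≤ 1 + ‖L‖ * 1 := by gcongr; exacts [ContinuousLinearMap.norm_id_le, Y.norm_mkQL_le]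
      _ = 1 + ‖L‖ := by rw [mul_one]

theorem exists_mkQL_comp_eq_of_lp_one [CompleteSpace X] (hY : IsClosed (Y : Set X)) {Γ : Type*}
    (T : ℓ¹(Γ, 𝕜) →L[𝕜] X ⧸ Y) {δ : ℝ} (hδ : 0 < δ) :
    ∃ T' : ℓ¹(Γ, 𝕜) →L[𝕜] X, Y.mkQL ∘L T' = T ∧ ‖T'‖ ≤ ‖T‖ + δ := by
  classical
  -- makes `X ⧸ Y` Hausdorff, as `lp.ext_continuousLinearMap` requires
  have := hY
  have hlift : ∀ γ, ∃ x : X, Y.mkQ x = T (lp.single 1 γ 1) ∧ ‖x‖ ≤ ‖T‖ + δ := fun γ => by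
    obtain ⟨x, hx, hxT⟩ := Quotient.norm_mk_lt (T (lp.single 1 γ 1)) hδ
    refine ⟨x, hx, hxT.le.trans (add_le_add_left ?_ δ)⟩
    simpa using T.le_opNorm (lp.single 1 γ (1 : 𝕜))
  choose u hu_mk hu_norm using hlift
  refine ⟨lp.tsumSmulCLM u _ hu_norm, ?_, lp.norm_tsumSmulCLM_le u hu_norm (by positivity)⟩
  refine lp.ext_continuousLinearMap ENNReal.one_ne_top fun γ => ?_
  ext
  simp [lp.tsumSmulCLM_single, hu_mk]

end Submodule

theorem stmt9 {X : Type*} [NormedAddCommGroup X] [NormedSpace ℝ X] [CompleteSpace X]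
    (Y : Submodule ℝ X) (hY : IsClosed (Y : Set X)) (Γ : Type*) (C : ℝ)
    (e : (X ⧸ Y) ≃L[ℝ] lp (fun _ : Γ => ℝ) 1)
    (he : ‖(e : (X ⧸ Y) →L[ℝ] lp (fun _ : Γ => ℝ) 1)‖ *
      ‖(e.symm : lp (fun _ : Γ => ℝ) 1 →L[ℝ] (X ⧸ Y))‖ ≤ C) :
    ∀ ε > 0, ∃ P : X →L[ℝ] X,
      (∀ x, P x ∈ Y) ∧ (∀ y ∈ Y, P y = y) ∧ ‖P‖ ≤ 1 + C + ε := by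
  intro ε hε
  set E : (X ⧸ Y) →L[ℝ] lp (fun _ : Γ => ℝ) 1 := (e : (X ⧸ Y) →L[ℝ] lp (fun _ : Γ => ℝ) 1)
  set S : lp (fun _ : Γ => ℝ) 1 →L[ℝ] (X ⧸ Y) := (e.symm : lp (fun _ : Γ => ℝ) 1 →L[ℝ] (X ⧸ Y))
  set δ := ε / (‖E‖ + 1)
  obtain ⟨T, hT_lift, hT_norm⟩ := Y.exists_mkQL_comp_eq_of_lp_one hY S (show 0 < δ by positivity)
  obtain ⟨P, hP_mem, hP_fix, hP_norm⟩ := Y.exists_projection_of_mkQL_comp_eq_id (T ∘L E)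
    (by rw [← ContinuousLinearMap.comp_assoc, hT_lift]; exact e.coe_symm_comp_coe)
  refine ⟨P, hP_mem, hP_fix, hP_norm.trans ?_⟩
  have hδE : δ * ‖E‖ ≤ ε := by
    rw [div_mul_eq_mul_div, div_le_iff₀ (by positivity)]
    nlinarith [norm_nonneg E]
  calc 1 + ‖T ∘L E‖ ≤ 1 + (‖S‖ + δ) * ‖E‖ := by
        gcongr
        exact (T.opNorm_comp_le E).trans (by gcongr)
    _ ≤ 1 + C + ε := by linarith
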